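/- (Zhang-type criterion, the case θ = π) Let N_A, N_B ≥ 2 and let ρ be a separable bipartite density matrix on (Fin N_A × Fin N_B), with marginals ρ_A, ρ_B. Then ‖RM( ρ − ρ_A ⊗ₖ ρ_B )‖_tr ≤ √( (1 − tr(ρ_A²)) · (1 − tr(ρ_B²)) ). -/

import Mathlib

open Matrix Kronecker Complex ComplexOrder

noncomputable def traceNorm {m n : Type*} [Fintype m] [Fintype n] [DecidableEq n]
    (M : Matrix m n ℂ) : ℝ :=
  (((Matrix.posSemidef_conjTranspose_mul_self M).1.eigenvectorUnitary : Matrix n n ℂ) *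
    diagonal (((↑) : ℝ → ℂ) ∘ (√·) ∘ (Matrix.posSemidef_conjTranspose_mul_self M).1.eigenvalues) *
    (star (Matrix.posSemidef_conjTranspose_mul_self M).1.eigenvectorUnitary : Matrix n n ℂ)).trace.re

def realign {NA NB : ℕ} (ρ : Matrix (Fin NA × Fin NB) (Fin NA × Fin NB) ℂ) :
    Matrix (Fin NA × Fin NA) (Fin NB × Fin NB) ℂ :=
  fun p q => ρ (p.1, q.1) (p.2, q.2)

def IsDensityMatrix {n : Type*} [Fintype n] (ρ : Matrix n n ℂ) : Prop :=
  ρ.PosSemidef ∧ ρ.trace = 1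

noncomputable def hsNorm {m n : Type*} [Fintype m] [Fintype n] (M : Matrix m n ℂ) : ℝ :=
  Real.sqrt (∑ i, ∑ j, ‖M i j‖ ^ 2)

noncomputable def hsInner {m n : Type*} [Fintype m] [Fintype n] (X Y : Matrix m n ℂ) : ℂ :=
  (Xᴴ * Y).trace

noncomputable def marginalA {NA NB : ℕ} (ρ : Matrix (Fin NA × Fin NB) (Fin NA × Fin NB) ℂ) :
    Matrix (Fin NA) (Fin NA) ℂ :=
  fun m n => ∑ μ, ρ (m, μ) (n, μ)

noncomputable def marginalB {NA NB : ℕ} (ρ : Matrix (Fin NA × Fin NB) (Fin NA × Fin NB) ℂ) :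
    Matrix (Fin NB) (Fin NB) ℂ :=
  fun μ ν => ∑ m, ρ (m, μ) (m, ν)

def SeparableState {NA NB : ℕ} (ρ : Matrix (Fin NA × Fin NB) (Fin NA × Fin NB) ℂ) : Prop :=
  ∃ (ι : Type) (s : Finset ι) (p : ι → ℝ)
    (ρA : ι → Matrix (Fin NA) (Fin NA) ℂ) (ρB : ι → Matrix (Fin NB) (Fin NB) ℂ),
    (∀ i ∈ s, 0 < p i) ∧ (∑ i ∈ s, p i = 1) ∧
    (∀ i ∈ s, IsDensityMatrix (ρA i)) ∧ (∀ i ∈ s, IsDensityMatrix (ρB i)) ∧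
    ρ = ∑ i ∈ s, (p i : ℂ) • (ρA i ⊗ₖ ρB i)

noncomputable def l2OpNorm {n : Type*} [Fintype n] [DecidableEq n] (M : Matrix n n ℂ) : ℝ :=
  ‖Matrix.toEuclideanCLM (𝕜 := ℂ) (n := n) M‖

/-!
Write `ρ = ∑ pᵢ Aᵢ ⊗ Bᵢ`, so that `ρ_A = ∑ pᵢ Aᵢ` and `ρ_B = ∑ pᵢ Bᵢ`. The covariance identity
gives `ρ - ρ_A ⊗ ρ_B = ∑ pᵢ (Aᵢ - ρ_A) ⊗ (Bᵢ - ρ_B)`, and realignment turns each Kronecker product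
`X ⊗ Y` into the rank-one matrix `vec X (vec Y)ᵀ`, whose trace norm is `‖X‖₂ ‖Y‖₂`. The trace
norm is bounded on such sums by pairing with the partial isometry `U` of the polar decomposition
(`‖M‖_tr = Re tr (Uᴴ M)` with `‖U‖ ≤ 1`). Cauchy–Schwarz in the weights then leaves the variances
`∑ pᵢ ‖Aᵢ - ρ_A‖₂² = ∑ pᵢ tr Aᵢ² - tr ρ_A² ≤ 1 - tr ρ_A²`, and likewise for `B`.
-/

open scoped Matrix.Norms.L2Operator

theorem LinearMap.sum_smul_apply_centered {R M N P ι : Type*} [CommRing R] [AddCommGroup M]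
    [Module R M] [AddCommGroup N] [Module R N] [AddCommGroup P] [Module R P]
    (f : M →ₗ[R] N →ₗ[R] P) (s : Finset ι) (w : ι → R) (hw : ∑ i ∈ s, w i = 1)
    (a : ι → M) (b : ι → N) :
    ∑ i ∈ s, w i • f (a i - ∑ j ∈ s, w j • a j) (b i - ∑ j ∈ s, w j • b j) =
      ∑ i ∈ s, w i • f (a i) (b i) - f (∑ i ∈ s, w i • a i) (∑ i ∈ s, w i • b i) := by
  set a₀ := ∑ j ∈ s, w j • a j
  set b₀ := ∑ j ∈ s, w j • b j
  have ha₀ : ∑ i ∈ s, w i • f (a i) b₀ = f a₀ b₀ := by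
    simp only [a₀, map_sum, map_smul, LinearMap.sum_apply, LinearMap.smul_apply]
  have hb₀ : ∑ i ∈ s, w i • f a₀ (b i) = f a₀ b₀ := by
    simp only [b₀, map_sum, map_smul]
  have hw₀ : ∑ i ∈ s, w i • f a₀ b₀ = f a₀ b₀ := by rw [← Finset.sum_smul, hw, one_smul]
  simp only [map_sub, LinearMap.sub_apply, smul_sub, Finset.sum_sub_distrib, ha₀, hb₀, hw₀]
  abel

theorem Real.sum_mul_mul_le_sqrt_mul_sqrt {ι : Type*} (s : Finset ι) {w : ι → ℝ}
    (hw : ∀ i ∈ s, 0 ≤ w i) (f g : ι → ℝ) :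
    ∑ i ∈ s, w i * (f i * g i) ≤ √(∑ i ∈ s, w i * f i ^ 2) * √(∑ i ∈ s, w i * g i ^ 2) := by
  have hsq : ∀ i ∈ s, √(w i) ^ 2 = w i := fun i hi => Real.sq_sqrt (hw i hi)
  calc ∑ i ∈ s, w i * (f i * g i) = ∑ i ∈ s, (√(w i) * f i) * (√(w i) * g i) :=
        Finset.sum_congr rfl fun i hi => by rw [mul_mul_mul_comm, ← sq, hsq i hi]
    _ ≤ √(∑ i ∈ s, (√(w i) * f i) ^ 2) * √(∑ i ∈ s, (√(w i) * g i) ^ 2) :=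
        Real.sum_mul_le_sqrt_mul_sqrt s _ _
    _ = √(∑ i ∈ s, w i * f i ^ 2) * √(∑ i ∈ s, w i * g i ^ 2) := by
        congr 2 <;> exact Finset.sum_congr rfl fun i hi => by rw [mul_pow, hsq i hi]

namespace Matrix

variable {m n : Type*} [Fintype m] [Fintype n]

lemma norm_dotProduct_le (x y : n → ℂ) :
    ‖x ⬝ᵥ y‖ ≤ ‖WithLp.toLp 2 x‖ * ‖WithLp.toLp 2 y‖ := by
  have h := norm_inner_le_norm (𝕜 := ℂ) (WithLp.toLp 2 (star y)) (WithLp.toLp 2 x)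
  rw [EuclideanSpace.inner_toLp_toLp, star_star] at h
  have hy : ‖WithLp.toLp 2 (star y)‖ = ‖WithLp.toLp 2 y‖ := by
    simp [EuclideanSpace.norm_eq]
  rwa [hy, mul_comm] at h

lemma norm_toLp_uncurry_sq {X : Matrix n n ℂ} (hX : X.IsHermitian) :
    ‖WithLp.toLp 2 (Function.uncurry X)‖ ^ 2 = (X * X).trace.re := by
  simp only [EuclideanSpace.norm_sq_eq, Fintype.sum_prod_type, trace, diag_apply, mul_apply,
    Complex.re_sum]
  refine Finset.sum_congr rfl fun i _ => Finset.sum_congr rfl fun j _ => ?_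
  rw [← hX.apply j i]
  simp only [Complex.sq_norm, Complex.normSq_apply, RCLike.star_def, Complex.mul_re,
    Complex.conj_re, Complex.conj_im, mul_neg, sub_neg_eq_add]
  rfl

lemma trace_conjStarAlgAut [DecidableEq n] (u : unitary (Matrix n n ℂ)) (X : Matrix n n ℂ) :
    (Unitary.conjStarAlgAut ℂ _ u X).trace = X.trace := by
  rw [Unitary.conjStarAlgAut_apply, trace_mul_cycle, Unitary.coe_star_mul_self, one_mul]

lemma l2_opNorm_conjStarAlgAut [DecidableEq n] (u : unitary (Matrix n n ℂ)) (X : Matrix n n ℂ) :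
    ‖Unitary.conjStarAlgAut ℂ _ u X‖ = ‖X‖ := by
  rw [Unitary.conjStarAlgAut_apply, ← Unitary.coe_star, CStarRing.norm_mul_coe_unitary,
    CStarRing.norm_coe_unitary_mul]

lemma diagonal_ofReal_mul_diagonal_ofReal [DecidableEq n] (f g : n → ℝ) :
    diagonal (RCLike.ofReal ∘ f : n → ℂ) * diagonal (RCLike.ofReal ∘ g) =
      diagonal (RCLike.ofReal ∘ (f * g)) := by
  rw [diagonal_mul_diagonal]
  simp

lemma PosSemidef.re_trace_mul_self_le [DecidableEq n] {A : Matrix n n ℂ} (hA : A.PosSemidef) :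
    (A * A).trace.re ≤ A.trace.re ^ 2 := by
  set d := hA.1.eigenvalues
  have hAA : A * A = Unitary.conjStarAlgAut ℂ _ hA.1.eigenvectorUnitary
      (diagonal (RCLike.ofReal ∘ (d * d))) := by
    rw [← diagonal_ofReal_mul_diagonal_ofReal, map_mul, ← hA.1.spectral_theorem]
  rw [hAA, trace_conjStarAlgAut, trace_diagonal, hA.1.trace_eq_sum_eigenvalues]
  simp only [Function.comp_apply, Complex.re_sum, ← sq]
  exact Finset.sum_sq_le_sq_sum_of_nonneg fun i _ => hA.eigenvalues_nonneg i

lemma exists_l2_opNorm_le_one_re_trace_eq_traceNorm [DecidableEq n] (M : Matrix m n ℂ) :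
    ∃ U : Matrix m n ℂ, ‖U‖ ≤ 1 ∧ (Uᴴ * M).trace.re = traceNorm M := by
  have hH := posSemidef_conjTranspose_mul_self M
  set d := hH.1.eigenvalues
  set conj := Unitary.conjStarAlgAut ℂ (Matrix n n ℂ) hH.1.eigenvectorUnitary
  have hspec : Mᴴ * M = conj (diagonal (RCLike.ofReal ∘ d)) := hH.1.spectral_theorem
  -- `S = |M|⁺` (with `0⁻¹ = 0`), so that `M * S` is the partial isometry of the polar decomposition
  set g : n → ℝ := fun j => (√(d j))⁻¹
  set S := conj (diagonal (RCLike.ofReal ∘ g))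
  have hS : Sᴴ = S := by
    rw [← star_eq_conjTranspose, ← map_star, star_eq_conjTranspose, diagonal_conjTranspose]
    congr 2
    funext j
    simp
  have hgd : g * d = fun j => √(d j) :=
    funext fun j => by simp only [g, Pi.mul_apply, inv_mul_eq_div, Real.div_sqrt]
  refine ⟨M * S, ?_, ?_⟩
  · have hUU : (M * S)ᴴ * (M * S) = conj (diagonal (RCLike.ofReal ∘ (g * d * g))) := by
      rw [conjTranspose_mul, hS, Matrix.mul_assoc, ← Matrix.mul_assoc Mᴴ, hspec, ← map_mul,
        ← map_mul, diagonal_ofReal_mul_diagonal_ofReal, diagonal_ofReal_mul_diagonal_ofReal,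
        mul_assoc]
    have hUU_le : ‖(M * S)ᴴ * (M * S)‖ ≤ 1 := by
      rw [hUU, l2_opNorm_conjStarAlgAut, l2_opNorm_diagonal]
      refine pi_norm_le_iff_of_nonneg zero_le_one |>.mpr fun j => ?_
      rcases eq_or_ne (√(d j)) 0 with h | h <;> simp [hgd, g, h]
    rw [l2_opNorm_conjTranspose_mul_self] at hUU_le
    nlinarith [norm_nonneg (M * S)]
  · have hM : traceNorm M = (conj (diagonal (RCLike.ofReal ∘ fun j => √(d j)))).trace.re := rfl
    rw [hM, conjTranspose_mul, hS, Matrix.mul_assoc, hspec, ← map_mul,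
      diagonal_ofReal_mul_diagonal_ofReal, hgd]

lemma re_trace_conjTranspose_mul_vecMulVec_le [DecidableEq m] [DecidableEq n] {U : Matrix m n ℂ} (hU : ‖U‖ ≤ 1)
    (x : m → ℂ) (y : n → ℂ) :
    (Uᴴ * vecMulVec x y).trace.re ≤ ‖WithLp.toLp 2 x‖ * ‖WithLp.toLp 2 y‖ := by
  rw [mul_vecMulVec, trace_vecMulVec]
  calc ((Uᴴ *ᵥ x) ⬝ᵥ y).re ≤ ‖(Uᴴ *ᵥ x) ⬝ᵥ y‖ := Complex.re_le_norm _
    _ ≤ ‖WithLp.toLp 2 (Uᴴ *ᵥ x)‖ * ‖WithLp.toLp 2 y‖ := norm_dotProduct_le _ _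
    _ ≤ ‖WithLp.toLp 2 x‖ * ‖WithLp.toLp 2 y‖ := by
      gcongr
      calc _ ≤ ‖Uᴴ‖ * ‖WithLp.toLp 2 x‖ := l2_opNorm_mulVec Uᴴ (WithLp.toLp 2 x)
        _ ≤ ‖WithLp.toLp 2 x‖ := by
          rw [l2_opNorm_conjTranspose]
          exact mul_le_of_le_one_left (norm_nonneg _) hU

lemma traceNorm_sum_smul_vecMulVec_le [DecidableEq m] [DecidableEq n] {ι : Type*}
    (s : Finset ι) {c : ι → ℝ} (hc : ∀ i ∈ s, 0 ≤ c i) (x : ι → m → ℂ) (y : ι → n → ℂ) :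
    traceNorm (∑ i ∈ s, (c i : ℂ) • vecMulVec (x i) (y i)) ≤
      ∑ i ∈ s, c i * (‖WithLp.toLp 2 (x i)‖ * ‖WithLp.toLp 2 (y i)‖) := by
  obtain ⟨U, hU, hUM⟩ := exists_l2_opNorm_le_one_re_trace_eq_traceNorm
    (∑ i ∈ s, (c i : ℂ) • vecMulVec (x i) (y i))
  rw [← hUM, Matrix.mul_sum, trace_sum, Complex.re_sum]
  refine Finset.sum_le_sum fun i hi => ?_
  rw [Matrix.mul_smul, trace_smul, smul_eq_mul, Complex.re_ofReal_mul]
  exact mul_le_mul_of_nonneg_left (re_trace_conjTranspose_mul_vecMulVec_le hU _ _) (hc i hi)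

end Matrix

lemma sum_mul_norm_sq_sub_sum_smul_le {n ι : Type*} [Fintype n] [DecidableEq n]
    (s : Finset ι) {p : ι → ℝ} (hp : ∀ i ∈ s, 0 ≤ p i) (hps : ∑ i ∈ s, p i = 1)
    {A : ι → Matrix n n ℂ} (hA : ∀ i ∈ s, IsDensityMatrix (A i)) :
    ∑ i ∈ s, p i * ‖WithLp.toLp 2 (Function.uncurry (A i - ∑ j ∈ s, (p j : ℂ) • A j))‖ ^ 2 ≤
      1 - ((∑ j ∈ s, (p j : ℂ) • A j) * ∑ j ∈ s, (p j : ℂ) • A j).trace.re := by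
  have hw : ∑ i ∈ s, (p i : ℂ) = 1 := by exact_mod_cast hps
  have hvar := ((LinearMap.mul ℂ (Matrix n n ℂ)).compr₂ (traceLinearMap n ℂ ℂ))
    |>.sum_smul_apply_centered s (fun i => (p i : ℂ)) hw A A
  simp only [LinearMap.compr₂_apply, LinearMap.mul_apply', traceLinearMap_apply,
    smul_eq_mul] at hvar
  set P := ∑ j ∈ s, (p j : ℂ) • A j
  have hP : P.IsHermitian :=
    isSelfAdjoint_sum s fun i hi => (hA i hi).1.1.smul (Complex.conj_ofReal (p i))
  have hpure : ∀ i ∈ s, (A i * A i).trace.re ≤ 1 := fun i hi => by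
    simpa [(hA i hi).2] using (hA i hi).1.re_trace_mul_self_le
  calc ∑ i ∈ s, p i * ‖WithLp.toLp 2 (Function.uncurry (A i - P))‖ ^ 2
      = (∑ i ∈ s, (p i : ℂ) * ((A i - P) * (A i - P)).trace).re := by
        rw [Complex.re_sum]
        refine Finset.sum_congr rfl fun i hi => ?_
        rw [Matrix.norm_toLp_uncurry_sq ((hA i hi).1.1.sub hP), Complex.re_ofReal_mul]
    _ = ∑ i ∈ s, p i * (A i * A i).trace.re - (P * P).trace.re := by
        rw [hvar]
        simp only [Complex.sub_re, Complex.re_sum, Complex.re_ofReal_mul]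
    _ ≤ ∑ i ∈ s, p i * 1 - (P * P).trace.re := by
        gcongr with i hi
        exacts [hp i hi, hpure i hi]
    _ = 1 - (P * P).trace.re := by rw [← Finset.sum_mul, hps, one_mul]

section Bipartite

variable {NA NB : ℕ} {ι : Type*} (s : Finset ι) (c : ι → ℂ)
  (X : ι → Matrix (Fin NA) (Fin NA) ℂ) (Y : ι → Matrix (Fin NB) (Fin NB) ℂ)

lemma marginalA_sum_smul_kronecker :
    marginalA (∑ i ∈ s, c i • (X i ⊗ₖ Y i)) = ∑ i ∈ s, (c i * (Y i).trace) • X i := by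
  ext m k
  simp only [marginalA, Matrix.sum_apply, Matrix.smul_apply, kronecker_apply, smul_eq_mul,
    trace, diag_apply, Finset.mul_sum]
  rw [Finset.sum_comm]
  refine Finset.sum_congr rfl fun i _ => ?_
  rw [Finset.sum_mul]
  exact Finset.sum_congr rfl fun μ _ => by ring

lemma marginalB_sum_smul_kronecker :
    marginalB (∑ i ∈ s, c i • (X i ⊗ₖ Y i)) = ∑ i ∈ s, (c i * (X i).trace) • Y i := by
  ext μ ν
  simp only [marginalB, Matrix.sum_apply, Matrix.smul_apply, kronecker_apply, smul_eq_mul,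
    trace, diag_apply, Finset.mul_sum]
  rw [Finset.sum_comm]
  refine Finset.sum_congr rfl fun i _ => ?_
  rw [Finset.sum_mul]
  exact Finset.sum_congr rfl fun m _ => by ring

lemma realign_sum_smul_kronecker :
    realign (∑ i ∈ s, c i • (X i ⊗ₖ Y i)) =
      ∑ i ∈ s, c i • vecMulVec (Function.uncurry (X i)) (Function.uncurry (Y i)) := by
  ext ⟨m, k⟩ ⟨μ, ν⟩
  simp only [realign, Matrix.sum_apply, Matrix.smul_apply, kroneckerMap_apply, smul_eq_mul,
    vecMulVec_apply]
  rfl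

end Bipartite

theorem zhang_criterion_general
    (NA NB : ℕ)
    (ρ : Matrix (Fin NA × Fin NB) (Fin NA × Fin NB) ℂ)
    (hsep : SeparableState ρ) :
    traceNorm (realign (ρ - marginalA ρ ⊗ₖ marginalB ρ)) ≤
      Real.sqrt ((1 - ((marginalA ρ * marginalA ρ).trace).re)
        * (1 - ((marginalB ρ * marginalB ρ).trace).re)) := by
  obtain ⟨ι, s, p, A, B, hp, hps, hA, hB, rfl⟩ := hsep
  have hp' : ∀ i ∈ s, 0 ≤ p i := fun i hi => (hp i hi).le
  have hPA : marginalA (∑ i ∈ s, (p i : ℂ) • (A i ⊗ₖ B i)) = ∑ i ∈ s, (p i : ℂ) • A i := by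
    rw [marginalA_sum_smul_kronecker]
    exact Finset.sum_congr rfl fun i hi => by rw [(hB i hi).2, mul_one]
  have hPB : marginalB (∑ i ∈ s, (p i : ℂ) • (A i ⊗ₖ B i)) = ∑ i ∈ s, (p i : ℂ) • B i := by
    rw [marginalB_sum_smul_kronecker]
    exact Finset.sum_congr rfl fun i hi => by rw [(hA i hi).2, mul_one]
  have hcov : ∑ i ∈ s, (p i : ℂ) • ((A i - ∑ j ∈ s, (p j : ℂ) • A j) ⊗ₖ
        (B i - ∑ j ∈ s, (p j : ℂ) • B j)) =
      ∑ i ∈ s, (p i : ℂ) • (A i ⊗ₖ B i) -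
        (∑ i ∈ s, (p i : ℂ) • A i) ⊗ₖ ∑ i ∈ s, (p i : ℂ) • B i :=
    (kroneckerBilinear (R := ℂ)).sum_smul_apply_centered s _ (by exact_mod_cast hps) A B
  rw [hPA, hPB, ← hcov, realign_sum_smul_kronecker]
  have hvarA := sum_mul_norm_sq_sub_sum_smul_le s hp' hps hA
  have hvarB := sum_mul_norm_sq_sub_sum_smul_le s hp' hps hB
  calc _ ≤ _ := Matrix.traceNorm_sum_smul_vecMulVec_le s hp' _ _
    _ ≤ _ := Real.sum_mul_mul_le_sqrt_mul_sqrt s hp' _ _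
    _ ≤ _ := by gcongr
    _ = _ := (Real.sqrt_mul ((Finset.sum_nonneg fun i hi =>
        mul_nonneg (hp' i hi) (sq_nonneg _)).trans hvarA) _).symm

theorem zhang_criterion
    (NA NB : ℕ) (hNA : 2 ≤ NA) (hNB : 2 ≤ NB)
    (ρ : Matrix (Fin NA × Fin NB) (Fin NA × Fin NB) ℂ)
    (hρ : IsDensityMatrix ρ) (hsep : SeparableState ρ) :
    traceNorm (realign (ρ - marginalA ρ ⊗ₖ marginalB ρ)) ≤
      Real.sqrt ((1 - ((marginalA ρ * marginalA ρ).trace).re)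
        * (1 - ((marginalB ρ * marginalB ρ).trace).re)) :=
  zhang_criterion_general NA NB ρ hsep
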